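/- arXiv:2207.02153 — 2 statements merged into one kernel-verified Lean document; each statement's English description precedes it below -/
import Mathlib

section
/- Let (A, m, k) be a local ring, a an ideal with minimal set of generators x_1,...,x_n, and E the Koszul complex on x_1,...,x_n. Then every 1-cycle of E lies in m·E_1; that is, Z_1(E) ⊆ m·E_1. -/
noncomputable section

/-- The degree-one part `E₁ = ⊕_{i ∈ ι} A·eᵢ` of the Koszul complex on a family indexed
by `ι` (a wrapper around `ι →₀ A`). -/
def KE1 (ι A : Type) [CommRing A] : Type := ι →₀ A

instance (ι A : Type) [CommRing A] : AddCommGroup (KE1 ι A) :=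
  inferInstanceAs (AddCommGroup (ι →₀ A))

instance (ι A : Type) [CommRing A] : Module A (KE1 ι A) :=
  inferInstanceAs (Module A (ι →₀ A))

/-- First differential of the Koszul complex on the family `x`: `eᵢ ↦ xᵢ`. -/
def koszulD1 {A : Type} [CommRing A] {ι : Type} (x : ι → A) : KE1 ι A →ₗ[A] A :=
  Finsupp.linearCombination A x

/-- The `1`-cycles of the Koszul complex on `x`. -/
def koszulZ1 {A : Type} [CommRing A] {ι : Type} (x : ι → A) : Submodule A (KE1 ι A) :=
  LinearMap.ker (koszulD1 x)

/-- The `1`-boundaries of the Koszul complex on `x`: the image of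
`d₂ : Λ² → E₁`, `eᵢ ∧ eⱼ ↦ xᵢ eⱼ - xⱼ eᵢ`. -/
def koszulB1 {A : Type} [CommRing A] {ι : Type} (x : ι → A) : Submodule A (KE1 ι A) :=
  Submodule.span A
    {v | ∃ i j, v = x i • Finsupp.single j (1 : A) - x j • Finsupp.single i (1 : A)}

/-- The first Koszul homology module `H₁(x; A) = Z₁/B₁`. -/
def koszulH1 {A : Type} [CommRing A] {ι : Type} (x : ι → A) : Type :=
  ↥(koszulZ1 x) ⧸ (koszulB1 x).comap (koszulZ1 x).subtype

instance {A : Type} [CommRing A] {ι : Type} (x : ι → A) : AddCommGroup (koszulH1 x) :=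
  inferInstanceAs (AddCommGroup (↥(koszulZ1 x) ⧸ (koszulB1 x).comap (koszulZ1 x).subtype))

instance {A : Type} [CommRing A] {ι : Type} (x : ι → A) : Module A (koszulH1 x) :=
  inferInstanceAs (Module A (↥(koszulZ1 x) ⧸ (koszulB1 x).comap (koszulZ1 x).subtype))

/-- `H₁(x; A)` is a free `A⧸a`-module.  Since `H₁` carries an `A`-module structure and
`A⧸a`-scalar multiplication is induced by the `A`-one, an `A`-linear isomorphism with a module
`ι' →₀ A⧸a` of the form "direct sum of copies of `A⧸a`" expresses exactly freeness over `A⧸a`. -/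
def KoszulH1FreeOver {A : Type} [CommRing A] {ι : Type} (x : ι → A) (a : Ideal A) : Prop :=
  ∃ ι' : Type, Nonempty (koszulH1 x ≃ₗ[A] (ι' →₀ A ⧸ a))

/-- `x` is a minimal set of generators of the ideal `a` of the local ring `A`: it generates `a`
and the images of the `x i` in `a/ma` form a basis of this `k = A/m`-vector space, i.e. they
span it (`a ≤ (x) + m·a`) and are `k`-linearly independent (a linear combination `∑ cᵢ xᵢ`
lies in `m·a` only if all `cᵢ ∈ m`). -/
def IsMinimalGenerators {A : Type} [CommRing A] [IsLocalRing A] (a : Ideal A) {ι : Type}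
    (x : ι → A) : Prop :=
  Ideal.span (Set.range x) = a ∧
  (a ≤ Ideal.span (Set.range x) ⊔ IsLocalRing.maximalIdeal A * a) ∧
  ∀ c : ι →₀ A, (c.sum fun i r => r * x i) ∈ IsLocalRing.maximalIdeal A * a →
    ∀ i, c i ∈ IsLocalRing.maximalIdeal A

/-- if `x₁, …, xₙ` is a minimal set of generators of an ideal `a` of a local ring
`(A, m, k)`, then every `1`-cycle of the Koszul complex on `x` lies in `m·E₁`. -/
theorem koszul_one_cycles_le_max_smul {A : Type} [CommRing A] [IsLocalRing A] (a : Ideal A)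
    {n : ℕ} (x : Fin n → A) (hmin : IsMinimalGenerators a x) :
    koszulZ1 x ≤ IsLocalRing.maximalIdeal A • (⊤ : Submodule A (KE1 (Fin n) A)) := by
  intro c₀ hc
  let c : Fin n →₀ A := c₀
  have hc0 : (c.sum fun i r => r * x i) = 0 := by
    have h := hc
    simp only [koszulZ1, LinearMap.mem_ker, koszulD1] at h
    have h' : Finsupp.linearCombination A x c = 0 := h
    rw [Finsupp.linearCombination_apply] at h'
    simpa [smul_eq_mul] using h'
  have hmem : ∀ i, c i ∈ IsLocalRing.maximalIdeal A := fun i =>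
    hmin.2.2 c (hc0 ▸ Submodule.zero_mem _) i
  have hrepr : c = ∑ i ∈ c.support, (c i) • Finsupp.single i (1 : A) := by
    conv_lhs => rw [← Finsupp.sum_single c]
    rw [Finsupp.sum]
    refine Finset.sum_congr rfl fun i _ => ?_
    rw [Finsupp.smul_single, smul_eq_mul, mul_one]
  show c₀ ∈ IsLocalRing.maximalIdeal A • (⊤ : Submodule A (KE1 (Fin n) A))
  have : c₀ = ∑ i ∈ c.support, (c i) • (Finsupp.single i (1 : A) : KE1 (Fin n) A) := hrepr
  rw [this]
  exact Submodule.sum_mem _ fun i _ =>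
    Submodule.smul_mem_smul (hmem i) Submodule.mem_top
end
end

section
/- Let A be a commutative ring, a an ideal generated by x_1,...,x_n, and suppose H_1(x_1,...,x_n; A) = 0 where A is noetherian local and x_1,...,x_n ∈ m. Then x_1,...,x_n is an A-regular sequence. -/
noncomputable section

/-!
The Koszul complex of `x = (x', xₙ)` is the mapping cone of multiplication by `xₙ` on the
Koszul complex of `x'`. Concretely, restricting a `1`-boundary `w` of `x` to the first `n - 1`
coordinates gives `b + xₙ d` with `b` a boundary of `x'`, while `d₁(d) = -wₙ`.

If `Z₁(x) ⊆ B₁(x)`, apply this to a cycle `z` of `x'` extended by zero: then `d` is a cycle and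
`Z₁(x') ⊆ B₁(x') + xₙ Z₁(x')`, so Nakayama gives `Z₁(x') ⊆ B₁(x')`. Applied instead to the cycle
`l - r eₙ` built from `xₙ r = d₁(l)`, it shows `r ∈ (x')`, i.e. `xₙ` is regular on `A/(x')`.
Induction makes `x` weakly regular, hence regular since it lies in the maximal ideal.
-/

section

variable {A : Type} [CommRing A]

lemma koszulZ1_le_koszulB1_of_subsingleton {ι : Type} {x : ι → A}
    (h : Subsingleton (koszulH1 x)) : koszulZ1 x ≤ koszulB1 x := by
  rwa [koszulH1, Submodule.Quotient.subsingleton_iff, Submodule.comap_subtype_eq_top] at h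

lemma mem_koszulZ1_iff {ι : Type} {x : ι → A} {v : ι →₀ A} :
    v ∈ koszulZ1 x ↔ Finsupp.linearCombination A x v = 0 :=
  Iff.rfl

lemma mem_koszulB1_iff {ι : Type} {x : ι → A} {v : ι →₀ A} :
    v ∈ koszulB1 x ↔ v ∈ Submodule.span A
      {u : ι →₀ A | ∃ i j, u = x i • Finsupp.single j (1 : A) - x j • Finsupp.single i (1 : A)} :=
  Iff.rfl

lemma koszulZ1_fg [IsNoetherianRing A] {ι : Type} [Finite ι] (x : ι → A) :
    (koszulZ1 x).FG :=
  have : IsNoetherian A (KE1 ι A) := inferInstanceAs (IsNoetherian A (ι →₀ A))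
  IsNoetherian.noetherian _

lemma Ideal.ofList_ofFn {n : ℕ} (x : Fin n → A) :
    Ideal.ofList (List.ofFn x) = Ideal.span (Set.range x) :=
  congrArg Ideal.span (Set.ext fun r => List.mem_ofFn' x r)

lemma Finsupp.embDomain_castSuccEmb_apply_last {M : Type*} [Zero M] {n : ℕ} (l : Fin n →₀ M) :
    Finsupp.embDomain Fin.castSuccEmb l (Fin.last n) = 0 :=
  Finsupp.embDomain_of_notMem_range _ _ _ (by simp)

section Snoc

variable {n : ℕ} (x : Fin (n + 1) → A)

lemma exists_decomposition_of_mem_koszulB1 {w : Fin (n + 1) →₀ A} (hw : w ∈ koszulB1 x) :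
    ∃ b : Fin n →₀ A, b ∈ koszulB1 (Fin.init x) ∧ ∃ d : Fin n →₀ A,
      (∀ i, w i.castSucc = b i + x (Fin.last n) * d i) ∧
        Finsupp.linearCombination A (Fin.init x) d = -w (Fin.last n) := by
  simp only [mem_koszulB1_iff] at hw ⊢
  induction hw using Submodule.span_induction with
  | mem w hw =>
    obtain ⟨i, j, rfl⟩ := hw
    induction i using Fin.lastCases with
    | last =>
      induction j using Fin.lastCases with
      | last => exact ⟨0, zero_mem _, 0, by simp, by simp⟩
      | cast j =>
        refine ⟨0, zero_mem _, Finsupp.single j 1, fun i => ?_, ?_⟩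
        · simp [Finsupp.single_apply]
        · simp [Fin.init]
    | cast i =>
      induction j using Fin.lastCases with
      | last =>
        refine ⟨0, zero_mem _, -Finsupp.single i 1, fun k => ?_, ?_⟩
        · simp [Finsupp.single_apply]
        · simp [Fin.init]
      | cast j =>
        refine ⟨Fin.init x i • Finsupp.single j 1 - Fin.init x j • Finsupp.single i 1,
          Submodule.subset_span ⟨i, j, rfl⟩, 0, fun k => ?_, ?_⟩
        · simp [Finsupp.single_apply, Fin.init]
        · simp
  | zero => exact ⟨0, zero_mem _, 0, fun _ => by simp, by simp⟩
  | add w w' _ _ hw hw' =>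
    obtain ⟨b, hb, d, hbd, hd⟩ := hw
    obtain ⟨b', hb', d', hbd', hd'⟩ := hw'
    refine ⟨b + b', add_mem hb hb', d + d', fun i => ?_, ?_⟩
    · rw [Finsupp.add_apply, hbd, hbd', Finsupp.add_apply, Finsupp.add_apply]
      ring
    · rw [map_add, hd, hd', Finsupp.add_apply, neg_add]
  | smul r w _ hw =>
    obtain ⟨b, hb, d, hbd, hd⟩ := hw
    refine ⟨r • b, Submodule.smul_mem _ r hb, r • d, fun i => ?_, ?_⟩
    · rw [Finsupp.smul_apply, hbd, Finsupp.smul_apply, Finsupp.smul_apply]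
      simp only [smul_eq_mul]
      ring
    · rw [map_smul, hd, Finsupp.smul_apply, smul_eq_mul, smul_eq_mul, mul_neg]

variable {x}

lemma koszulZ1_init_le_sup (hZB : koszulZ1 x ≤ koszulB1 x) :
    koszulZ1 (Fin.init x) ≤
      koszulB1 (Fin.init x) ⊔ Ideal.span {x (Fin.last n)} • koszulZ1 (Fin.init x) := by
  intro (z : Fin n →₀ A) hz
  have hz' : Finsupp.embDomain Fin.castSuccEmb z ∈ koszulZ1 x := by
    rw [mem_koszulZ1_iff, Finsupp.linearCombination_embDomain]
    exact hz
  obtain ⟨b, hb, d, hbd, hd⟩ := exists_decomposition_of_mem_koszulB1 x (hZB hz')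
  have hz_eq : z = b + x (Fin.last n) • d := by
    ext i
    exact (Finsupp.embDomain_apply_self Fin.castSuccEmb z i).symm.trans (hbd i)
  have hdZ : d ∈ koszulZ1 (Fin.init x) := by
    rw [mem_koszulZ1_iff, hd, Finsupp.embDomain_castSuccEmb_apply_last, neg_zero]
  rw [hz_eq]
  exact Submodule.add_mem_sup hb
    (Submodule.smul_mem_smul (Ideal.mem_span_singleton_self _) hdZ)

lemma koszulZ1_init_le_koszulB1_init [IsNoetherianRing A] [IsLocalRing A]
    (hx : x (Fin.last n) ∈ IsLocalRing.maximalIdeal A) (hZB : koszulZ1 x ≤ koszulB1 x) :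
    koszulZ1 (Fin.init x) ≤ koszulB1 (Fin.init x) :=
  Submodule.le_of_le_smul_of_le_jacobson_bot (koszulZ1_fg _)
    ((Ideal.span_singleton_le_iff_mem _).2 (IsLocalRing.maximalIdeal_le_jacobson ⊥ hx))
    (koszulZ1_init_le_sup hZB)

lemma isSMulRegular_last_of_koszulZ1_le_koszulB1 (hZB : koszulZ1 x ≤ koszulB1 x) :
    IsSMulRegular (A ⧸ Ideal.span (Set.range (Fin.init x))) (x (Fin.last n)) := by
  rw [isSMulRegular_quotient_iff_mem_of_smul_mem]
  intro r hr
  rw [Ideal.span, ← Finsupp.range_linearCombination] at hr ⊢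
  obtain ⟨l, hl⟩ := hr
  let v : Fin (n + 1) →₀ A :=
    Finsupp.embDomain Fin.castSuccEmb l - r • Finsupp.single (Fin.last n) 1
  have hv : v ∈ koszulZ1 x := by
    rw [mem_koszulZ1_iff, map_sub, Finsupp.linearCombination_embDomain, map_smul,
      Finsupp.linearCombination_single, one_smul, sub_eq_zero, smul_eq_mul, mul_comm]
    exact hl
  obtain ⟨-, -, d, -, hd⟩ := exists_decomposition_of_mem_koszulB1 x (hZB hv)
  exact ⟨d, by simpa [v, Finsupp.embDomain_castSuccEmb_apply_last] using hd⟩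

end Snoc

theorem isWeaklyRegular_of_koszulZ1_le_koszulB1 [IsNoetherianRing A] [IsLocalRing A] {n : ℕ}
    (x : Fin n → A) (hx : ∀ i, x i ∈ IsLocalRing.maximalIdeal A)
    (hZB : koszulZ1 x ≤ koszulB1 x) : RingTheory.Sequence.IsWeaklyRegular A (List.ofFn x) := by
  induction n with
  | zero => exact .nil A A
  | succ n ih =>
    rw [List.ofFn_succ', List.concat_eq_append, RingTheory.Sequence.isWeaklyRegular_append_iff,
      RingTheory.Sequence.isWeaklyRegular_singleton_iff]
    have hinit := koszulZ1_init_le_koszulB1_init (hx _) hZB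
    refine ⟨ih (Fin.init x) (fun i => hx _) hinit, ?_⟩
    rw [smul_eq_mul, Ideal.mul_top, Ideal.ofList_ofFn]
    exact isSMulRegular_last_of_koszulZ1_le_koszulB1 hZB

end

theorem regular_of_koszulH1_eq_zero_general {A : Type} [CommRing A] [IsNoetherianRing A]
    [IsLocalRing A] {n : ℕ} (x : Fin n → A)
    (hx : ∀ i, x i ∈ IsLocalRing.maximalIdeal A)
    (h1 : Subsingleton (koszulH1 x)) :
    RingTheory.Sequence.IsRegular A (List.ofFn x) := by
  rw [IsLocalRing.isRegular_iff_isWeaklyRegular_of_subset_maximalIdeal]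
  · exact isWeaklyRegular_of_koszulZ1_le_koszulB1 x hx (koszulZ1_le_koszulB1_of_subsingleton h1)
  · simpa [List.mem_ofFn'] using hx

/-- if `(A, m, k)` is a noetherian local ring, `x₁, …, xₙ ∈ m` generate the ideal
`a`, and the first Koszul homology `H₁(x₁, …, xₙ; A)` vanishes, then `x₁, …, xₙ` is an
`A`-regular sequence. -/
theorem regular_of_koszulH1_eq_zero {A : Type} [CommRing A] [IsNoetherianRing A]
    [IsLocalRing A] (a : Ideal A) {n : ℕ} (x : Fin n → A)
    (hx : ∀ i, x i ∈ IsLocalRing.maximalIdeal A) (hgen : Ideal.span (Set.range x) = a)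
    (h1 : Subsingleton (koszulH1 x)) :
    RingTheory.Sequence.IsRegular A (List.ofFn x) :=
  regular_of_koszulH1_eq_zero_general x hx h1
end
end
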